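/- Positive definiteness of the Fourier symbol: assume μ > 0 and λ ≥ μ. Then for every δ > 0 and every ξ ≠ 0, the d×d real symmetric matrix M^S_δ(ξ) = (C_μ/δ²)[ p_1(δ|ξ|)(I_d − ξ̂ξ̂ᵀ) + q_1(δ|ξ|) ξ̂ξ̂ᵀ ] + (C_{λ,μ}/δ²)(b_1(δ|ξ|))² ξ̂ξ̂ᵀ is positive definite, i.e. vᵀ M^S_δ(ξ) v > 0 for every nonzero v ∈ R^d. -/

import Mathlib

/-!
Common definitions for the formalization of
"Asymptotically compatible reproducing kernel collocation and meshfree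
integration for the peridynamic Navier equation".
-/

noncomputable section

open MeasureTheory Metric Set
open scoped BigOperators ENNReal Topology Real

/-- `d`-dimensional Euclidean space. -/
abbrev Ed (d : ℕ) : Type := EuclideanSpace ℝ (Fin d)

namespace PD

def toEd (d : ℕ) (v : Fin d → ℝ) : Ed d := (EuclideanSpace.equiv (Fin d) ℝ).symm v

def fstIdx (d : ℕ) [NeZero d] : Fin d := ⟨0, Nat.pos_of_ne_zero (NeZero.ne d)⟩

def lstIdx (d : ℕ) [NeZero d] : Fin d :=
  ⟨d - 1, Nat.sub_lt (Nat.pos_of_ne_zero (NeZero.ne d)) Nat.one_pos⟩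

/-- The rescaled nonlocal kernel `ρ_δ(r) = δ^{-(d+2)} ρ(r/δ)`. -/
def scaleK (d : ℕ) (ρ : ℝ → ℝ) (δ r : ℝ) : ℝ := (δ ^ (d + 2))⁻¹ * ρ (r / δ)

def Cα (d : ℕ) : ℝ := if d = 2 then 16 else 30
def Cβ (d : ℕ) : ℝ := if d = 2 then 2 else 3

/-- Kernel assumptions: nonnegative, nonincreasing, supported in `[0,1]`,
second moment over the unit ball equal to `d`. -/
def KernelOK (d : ℕ) (ρ : ℝ → ℝ) : Prop :=
  (∀ r, 0 ≤ ρ r) ∧ (∀ r t, 0 ≤ r → r ≤ t → ρ t ≤ ρ r) ∧ (∀ r, 1 < r → ρ r = 0) ∧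
    (∫ s in ball (0 : Ed d) 1, ρ ‖s‖ * ‖s‖ ^ 2) = (d : ℝ)

/-- `ρ` is not almost everywhere zero on `[0,∞)`. -/
def KernelNontrivial (ρ : ℝ → ℝ) : Prop :=
  ¬ ∀ᵐ r ∂(volume.restrict (Set.Ici (0 : ℝ))), ρ r = 0

/-- The bond-based peridynamic operator `L^B_δ`. -/
def LB (d : ℕ) (ρ : ℝ → ℝ) (δ : ℝ) (u : Ed d → Ed d) (x : Ed d) : Ed d :=
  ∫ s in ball (0 : Ed d) δ,
    ((scaleK d ρ δ ‖s‖ / ‖s‖ ^ 2) * (inner ℝ s (u (x + s) - u x) : ℝ)) • s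

/-- The nonlocal divergence operator `D_δ`. -/
def Dop (d : ℕ) (ρ : ℝ → ℝ) (δ : ℝ) (u : Ed d → Ed d) (x : Ed d) : ℝ :=
  ∫ s in ball (0 : Ed d) δ, scaleK d ρ δ ‖s‖ * (inner ℝ s (u (x + s) - u x) : ℝ)

/-- The nonlocal gradient operator `G_δ`. -/
def Gop (d : ℕ) (ρ : ℝ → ℝ) (δ : ℝ) (θ : Ed d → ℝ) (x : Ed d) : Ed d :=
  ∫ s in ball (0 : Ed d) δ, (scaleK d ρ δ ‖s‖ * (θ (x + s) - θ x)) • s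

/-- The linearized state-based peridynamic Navier operator `L^S_δ`. -/
def LS (d : ℕ) (ρ : ℝ → ℝ) (μ lam δ : ℝ) (u : Ed d → Ed d) (x : Ed d) : Ed d :=
  (Cα d * μ / d) • LB d ρ δ u x + (Cβ d * (lam - μ) / d) • Gop d ρ δ (Dop d ρ δ u) x

/-- Fourier transform `f̂(ξ) = ∫ e^{-i x·ξ} f(x) dx` of a scalar field. -/
def FT (d : ℕ) (f : Ed d → ℝ) (ξ : Ed d) : ℂ :=
  ∫ x : Ed d, Complex.exp (-Complex.I * ((inner ℝ x ξ : ℝ) : ℂ)) * (f x : ℂ)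

/-- `p_1(t)`. -/
def p1 (d : ℕ) [NeZero d] (ρ : ℝ → ℝ) (t : ℝ) : ℝ :=
  ∫ s in ball (0 : Ed d) 1,
    ρ ‖s‖ * (s (fstIdx d) ^ 2 / ‖s‖ ^ 2) * (1 - Real.cos (t * s (lstIdx d)))

/-- `q_1(t)`. -/
def q1 (d : ℕ) [NeZero d] (ρ : ℝ → ℝ) (t : ℝ) : ℝ :=
  ∫ s in ball (0 : Ed d) 1,
    ρ ‖s‖ * (s (lstIdx d) ^ 2 / ‖s‖ ^ 2) * (1 - Real.cos (t * s (lstIdx d)))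

/-- `b_1(t)`. -/
def b1 (d : ℕ) [NeZero d] (ρ : ℝ → ℝ) (t : ℝ) : ℝ :=
  ∫ s in ball (0 : Ed d) 1, ρ ‖s‖ * s (lstIdx d) * Real.sin (t * s (lstIdx d))

/-- `p_δ(t)`. -/
def pδ (d : ℕ) [NeZero d] (ρ : ℝ → ℝ) (δ t : ℝ) : ℝ :=
  ∫ s in ball (0 : Ed d) δ,
    scaleK d ρ δ ‖s‖ * (s (fstIdx d) ^ 2 / ‖s‖ ^ 2) * (1 - Real.cos (t * s (lstIdx d)))

/-- `q_δ(t)`. -/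
def qδ (d : ℕ) [NeZero d] (ρ : ℝ → ℝ) (δ t : ℝ) : ℝ :=
  ∫ s in ball (0 : Ed d) δ,
    scaleK d ρ δ ‖s‖ * (s (lstIdx d) ^ 2 / ‖s‖ ^ 2) * (1 - Real.cos (t * s (lstIdx d)))

/-- `b_δ(t)`. -/
def bδ (d : ℕ) [NeZero d] (ρ : ℝ → ℝ) (δ t : ℝ) : ℝ :=
  ∫ s in ball (0 : Ed d) δ, scaleK d ρ δ ‖s‖ * s (lstIdx d) * Real.sin (t * s (lstIdx d))

/-- The projection matrix `ξ̂ ξ̂ᵀ`. -/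
def projMat (d : ℕ) (ξ : Ed d) : Matrix (Fin d) (Fin d) ℝ :=
  Matrix.of fun i j => ξ i * ξ j / ‖ξ‖ ^ 2

/-- Fourier symbol `M^B_δ(ξ)`. -/
def MB (d : ℕ) [NeZero d] (ρ : ℝ → ℝ) (μ δ : ℝ) (ξ : Ed d) : Matrix (Fin d) (Fin d) ℝ :=
  ((Cα d * μ / d) / δ ^ 2) •
    (p1 d ρ (δ * ‖ξ‖) • ((1 : Matrix (Fin d) (Fin d) ℝ) - projMat d ξ)
      + q1 d ρ (δ * ‖ξ‖) • projMat d ξ)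

/-- Fourier symbol `M^D_δ(ξ)`. -/
def MD (d : ℕ) [NeZero d] (ρ : ℝ → ℝ) (μ lam δ : ℝ) (ξ : Ed d) : Matrix (Fin d) (Fin d) ℝ :=
  ((Cβ d * (lam - μ)) / δ ^ 2 * b1 d ρ (δ * ‖ξ‖) ^ 2) • projMat d ξ

/-- Fourier symbol `M^S_δ(ξ) = M^B_δ(ξ) + M^D_δ(ξ)`. -/
def MS (d : ℕ) [NeZero d] (ρ : ℝ → ℝ) (μ lam δ : ℝ) (ξ : Ed d) : Matrix (Fin d) (Fin d) ℝ :=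
  MB d ρ μ δ ξ + MD d ρ μ lam δ ξ

/-! ### RK collocation -/

/-- The cubic B-spline. -/
def spline (x : ℝ) : ℝ :=
  if 0 ≤ x ∧ x ≤ 1 / 2 then 2 / 3 - 4 * x ^ 2 + 4 * x ^ 3
  else if 1 / 2 ≤ x ∧ x ≤ 1 then 4 / 3 * (1 - x) ^ 3
  else 0

/-- `ĥ ∈ (0,1]^d` with maximal component 1. -/
def HhatOK (d : ℕ) (hhat : Fin d → ℝ) : Prop :=
  (∀ j, 0 < hhat j ∧ hhat j ≤ 1) ∧ (∃ j, hhat j = 1)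

/-- `h = h_max ĥ`. -/
def hvec (d : ℕ) (hhat : Fin d → ℝ) (hmax : ℝ) : Fin d → ℝ := fun j => hmax * hhat j

/-- Grid point `x_k`. -/
def gridPt (d : ℕ) (h : Fin d → ℝ) (k : Fin d → ℤ) : Ed d :=
  toEd d fun j => (k j : ℝ) * h j

/-- RK basis function `Ψ_k`. -/
def rkBasis (d : ℕ) (h : Fin d → ℝ) (k : Fin d → ℤ) (x : Ed d) : ℝ :=
  ∏ j : Fin d, spline (|x j - (k j : ℝ) * h j| / (2 * h j))

/-- RK interpolant `Π^h` of a scalar field. -/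
def interpS (d : ℕ) (h : Fin d → ℝ) (f : Ed d → ℝ) (x : Ed d) : ℝ :=
  ∑' k : Fin d → ℤ, rkBasis d h k x * f (gridPt d h k)

/-- RK interpolant `Π^h` of a vector field (componentwise). -/
def interpV (d : ℕ) (h : Fin d → ℝ) (u : Ed d → Ed d) (x : Ed d) : Ed d :=
  ∑' k : Fin d → ℤ, rkBasis d h k x • u (gridPt d h k)

/-- `i^h` applied to a vector-valued coefficient sequence. -/
def ihV (d : ℕ) (h : Fin d → ℝ) (c : (Fin d → ℤ) → Ed d) (x : Ed d) : Ed d :=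
  ∑' k : Fin d → ℤ, rkBasis d h k x • c k

/-- Discrete norm `|(u_k)|_h = ‖i^h(u_k)‖_{L²(ℝ^d;ℝ^d)}`. -/
def normH (d : ℕ) (h : Fin d → ℝ) (c : (Fin d → ℤ) → Ed d) : ℝ :=
  (eLpNorm (ihV d h c) 2 volume).toReal

def L2norm (d : ℕ) (u : Ed d → Ed d) : ℝ := (eLpNorm u 2 volume).toReal

def L2normOn (d : ℕ) (Ω : Set (Ed d)) (u : Ed d → Ed d) : ℝ :=
  (eLpNorm u 2 (volume.restrict Ω)).toReal

/-- The semi-discrete peridynamic Navier operator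
`L^{S,h}_δ u = (C_α μ/d) L^B_δ u + (C_β(λ-μ)/d) G_δ(Π^h(D_δ u))`. -/
def LSH (d : ℕ) (ρ : ℝ → ℝ) (μ lam δ : ℝ) (h : Fin d → ℝ)
    (u : Ed d → Ed d) (x : Ed d) : Ed d :=
  (Cα d * μ / d) • LB d ρ δ u x
    + (Cβ d * (lam - μ) / d) • Gop d ρ δ (interpS d h (Dop d ρ δ u)) x

/-- Supremum norm of the `n`-th derivative, `|u^{(n)}|_∞`. -/
def derivSup (d : ℕ) {F : Type} [NormedAddCommGroup F] [NormedSpace ℝ F]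
    (n : ℕ) (u : Ed d → F) : ℝ :=
  ⨆ x : Ed d, ‖iteratedFDeriv ℝ n u x‖

/-- All derivatives up to order `n` are bounded. -/
def BddDerivs (d : ℕ) {F : Type} [NormedAddCommGroup F] [NormedSpace ℝ F]
    (n : ℕ) (u : Ed d → F) : Prop :=
  ∀ m : ℕ, m ≤ n → ∃ M : ℝ, ∀ x, ‖iteratedFDeriv ℝ m u x‖ ≤ M

/-- Componentwise Laplacian of a vector field. -/
def vecLap (d : ℕ) (u : Ed d → Ed d) (x : Ed d) : Ed d :=
  ∑ j : Fin d, iteratedFDeriv ℝ 2 u x (fun _ => EuclideanSpace.single j (1 : ℝ))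

/-- Divergence of a vector field. -/
def divg (d : ℕ) (u : Ed d → Ed d) (x : Ed d) : ℝ :=
  ∑ j : Fin d, fderiv ℝ u x (EuclideanSpace.single j (1 : ℝ)) j

/-- Gradient of a scalar field. -/
def gradS (d : ℕ) (f : Ed d → ℝ) (x : Ed d) : Ed d :=
  toEd d fun i => fderiv ℝ f x (EuclideanSpace.single i (1 : ℝ))

/-- The Navier operator of linear elasticity `L^S_0 u = μ Δu + (μ+λ)∇(div u)`. -/
def LS0 (d : ℕ) (μ lam : ℝ) (u : Ed d → Ed d) (x : Ed d) : Ed d :=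
  μ • vecLap d u x + (μ + lam) • gradS d (divg d u) x

/-! ### Quasi-discrete operators -/

/-- Quadrature data for the quasi-discrete operators: points in the punctured
unit ball, symmetric under `s ↦ -s`, positive weights, reproducing the fourth
order moments of the kernel. -/
def QuadOK (d : ℕ) (ρ : ℝ → ℝ) (Qp : Finset (Ed d)) (ω : Ed d → ℝ) : Prop :=
  (∀ s ∈ Qp, s ≠ 0 ∧ ‖s‖ < 1) ∧ (∀ s ∈ Qp, -s ∈ Qp) ∧ (∀ s ∈ Qp, 0 < ω s) ∧
    ∀ i j : Fin d, (∑ s ∈ Qp, ω s * ρ ‖s‖ * (s i ^ 2 * s j ^ 2 / ‖s‖ ^ 2))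
      = ∫ s in ball (0 : Ed d) 1, ρ ‖s‖ * (s i ^ 2 * s j ^ 2 / ‖s‖ ^ 2)

/-- Quasi-discrete bond-based operator `L^B_{δ,ε}` (the quadrature points of
`B^ε_δ` are `δ • s` for `s ∈ B^{ε₁}_1`, with weights `ω_δ(δ•s) = δ^d ω(s)`). -/
def qLB (d : ℕ) (ρ : ℝ → ℝ) (Qp : Finset (Ed d)) (ω : Ed d → ℝ) (δ : ℝ)
    (u : Ed d → Ed d) (x : Ed d) : Ed d :=
  ∑ s ∈ Qp, ((δ ^ d * ω s) * (scaleK d ρ δ ‖δ • s‖ / ‖δ • s‖ ^ 2)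
      * (inner ℝ (δ • s) (u (x + δ • s) - u x) : ℝ)) • (δ • s)

/-- Quasi-discrete nonlocal divergence `D^ε_δ`. -/
def qD (d : ℕ) (ρ : ℝ → ℝ) (Qp : Finset (Ed d)) (ω : Ed d → ℝ) (δ : ℝ)
    (u : Ed d → Ed d) (x : Ed d) : ℝ :=
  ∑ s ∈ Qp, (δ ^ d * ω s) * scaleK d ρ δ ‖δ • s‖ * (inner ℝ (δ • s) (u (x + δ • s) - u x) : ℝ)

/-- Quasi-discrete nonlocal gradient `G^ε_δ`. -/
def qG (d : ℕ) (ρ : ℝ → ℝ) (Qp : Finset (Ed d)) (ω : Ed d → ℝ) (δ : ℝ)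
    (θ : Ed d → ℝ) (x : Ed d) : Ed d :=
  ∑ s ∈ Qp, ((δ ^ d * ω s) * scaleK d ρ δ ‖δ • s‖ * (θ (x + δ • s) - θ x)) • (δ • s)

/-- Quasi-discrete peridynamic Navier operator `L^S_{δ,ε}`. -/
def qLS (d : ℕ) (ρ : ℝ → ℝ) (Qp : Finset (Ed d)) (ω : Ed d → ℝ) (μ lam δ : ℝ)
    (u : Ed d → Ed d) (x : Ed d) : Ed d :=
  (Cα d * μ / d) • qLB d ρ Qp ω δ u x
    + (Cβ d * (lam - μ) / d) • qG d ρ Qp ω δ (qD d ρ Qp ω δ u) x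

/-- Semi-discrete quasi-discrete operator
`L^{S,h}_{δ,ε} u = (C_α μ/d) L^B_{δ,ε} u + (C_β(λ-μ)/d) G^ε_δ(Π^h(D^ε_δ u))`. -/
def qLSH (d : ℕ) (ρ : ℝ → ℝ) (Qp : Finset (Ed d)) (ω : Ed d → ℝ) (μ lam δ : ℝ)
    (h : Fin d → ℝ) (u : Ed d → Ed d) (x : Ed d) : Ed d :=
  (Cα d * μ / d) • qLB d ρ Qp ω δ u x
    + (Cβ d * (lam - μ) / d) • qG d ρ Qp ω δ (interpS d h (qD d ρ Qp ω δ u)) x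

/-- Discrete symbol `p^{ε₁}_1(t)`. -/
def p1q (d : ℕ) [NeZero d] (ρ : ℝ → ℝ) (Qp : Finset (Ed d)) (ω : Ed d → ℝ) (t : ℝ) : ℝ :=
  ∑ s ∈ Qp, ω s * ρ ‖s‖ * (s (fstIdx d) ^ 2 / ‖s‖ ^ 2) * (1 - Real.cos (t * s (lstIdx d)))

/-- Discrete symbol `q^{ε₁}_1(t)`. -/
def q1q (d : ℕ) [NeZero d] (ρ : ℝ → ℝ) (Qp : Finset (Ed d)) (ω : Ed d → ℝ) (t : ℝ) : ℝ :=
  ∑ s ∈ Qp, ω s * ρ ‖s‖ * (s (lstIdx d) ^ 2 / ‖s‖ ^ 2) * (1 - Real.cos (t * s (lstIdx d)))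

/-- Discrete symbol `b^{ε₁}_1(t)`. -/
def b1q (d : ℕ) [NeZero d] (ρ : ℝ → ℝ) (Qp : Finset (Ed d)) (ω : Ed d → ℝ) (t : ℝ) : ℝ :=
  ∑ s ∈ Qp, ω s * ρ ‖s‖ * s (lstIdx d) * Real.sin (t * s (lstIdx d))

/-- Fourier symbol `M^B_{δ,ε}(ξ)`. -/
def MBq (d : ℕ) [NeZero d] (ρ : ℝ → ℝ) (Qp : Finset (Ed d)) (ω : Ed d → ℝ)
    (μ δ : ℝ) (ξ : Ed d) : Matrix (Fin d) (Fin d) ℝ :=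
  ((Cα d * μ / d) / δ ^ 2) •
    (p1q d ρ Qp ω (δ * ‖ξ‖) • ((1 : Matrix (Fin d) (Fin d) ℝ) - projMat d ξ)
      + q1q d ρ Qp ω (δ * ‖ξ‖) • projMat d ξ)

/-- Fourier symbol `M^D_{δ,ε}(ξ)`. -/
def MDq (d : ℕ) [NeZero d] (ρ : ℝ → ℝ) (Qp : Finset (Ed d)) (ω : Ed d → ℝ)
    (μ lam δ : ℝ) (ξ : Ed d) : Matrix (Fin d) (Fin d) ℝ :=
  ((Cβ d * (lam - μ)) / δ ^ 2 * b1q d ρ Qp ω (δ * ‖ξ‖) ^ 2) • projMat d ξ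

/-- Fourier symbol `M^S_{δ,ε}(ξ)`. -/
def MSq (d : ℕ) [NeZero d] (ρ : ℝ → ℝ) (Qp : Finset (Ed d)) (ω : Ed d → ℝ)
    (μ lam δ : ℝ) (ξ : Ed d) : Matrix (Fin d) (Fin d) ℝ :=
  MBq d ρ Qp ω μ δ ξ + MDq d ρ Qp ω μ lam δ ξ

/-! ### Complex-valued operators (for sesquilinear pairings) -/

/-- Complex bond-based operator. -/
def LBC (d : ℕ) (ρ : ℝ → ℝ) (δ : ℝ) (u : Ed d → Fin d → ℂ) (x : Ed d) : Fin d → ℂ :=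
  ∫ s in ball (0 : Ed d) δ, fun i =>
    ((scaleK d ρ δ ‖s‖ / ‖s‖ ^ 2 : ℝ) : ℂ)
      * (∑ j : Fin d, (s j : ℂ) * (u (x + s) j - u x j)) * (s i : ℂ)

/-- Complex nonlocal divergence. -/
def DC (d : ℕ) (ρ : ℝ → ℝ) (δ : ℝ) (u : Ed d → Fin d → ℂ) (x : Ed d) : ℂ :=
  ∫ s in ball (0 : Ed d) δ,
    ((scaleK d ρ δ ‖s‖ : ℝ) : ℂ) * ∑ j : Fin d, (s j : ℂ) * (u (x + s) j - u x j)

/-- Complex nonlocal gradient. -/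
def GC (d : ℕ) (ρ : ℝ → ℝ) (δ : ℝ) (θ : Ed d → ℂ) (x : Ed d) : Fin d → ℂ :=
  ∫ s in ball (0 : Ed d) δ, fun i =>
    ((scaleK d ρ δ ‖s‖ : ℝ) : ℂ) * (θ (x + s) - θ x) * (s i : ℂ)

/-- RK interpolant of a complex scalar field. -/
def interpC (d : ℕ) (h : Fin d → ℝ) (θ : Ed d → ℂ) (x : Ed d) : ℂ :=
  ∑' k : Fin d → ℤ, (rkBasis d h k x : ℂ) * θ (gridPt d h k)

/-- `i^h` on complex coefficient sequences. -/
def ihC (d : ℕ) (h : Fin d → ℝ) (c : (Fin d → ℤ) → Fin d → ℂ) (x : Ed d) : Fin d → ℂ :=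
  ∑' k : Fin d → ℤ, (rkBasis d h k x : ℂ) • c k

/-- Complex semi-discrete peridynamic Navier operator `L^{S,h}_δ`. -/
def LSHC (d : ℕ) (ρ : ℝ → ℝ) (μ lam δ : ℝ) (h : Fin d → ℝ)
    (u : Ed d → Fin d → ℂ) (x : Ed d) : Fin d → ℂ :=
  ((Cα d * μ / d : ℝ) : ℂ) • LBC d ρ δ u x
    + ((Cβ d * (lam - μ) / d : ℝ) : ℂ) • GC d ρ δ (interpC d h (DC d ρ δ u)) x

/-- Complex quasi-discrete bond-based operator. -/
def qLBC (d : ℕ) (ρ : ℝ → ℝ) (Qp : Finset (Ed d)) (ω : Ed d → ℝ) (δ : ℝ)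
    (u : Ed d → Fin d → ℂ) (x : Ed d) : Fin d → ℂ := fun i =>
  ∑ s ∈ Qp, (((δ ^ d * ω s) * (scaleK d ρ δ ‖δ • s‖ / ‖δ • s‖ ^ 2) : ℝ) : ℂ)
      * (∑ j : Fin d, ((δ • s : Ed d) j : ℂ) * (u (x + δ • s) j - u x j))
      * ((δ • s : Ed d) i : ℂ)

/-- Complex quasi-discrete nonlocal divergence. -/
def qDC (d : ℕ) (ρ : ℝ → ℝ) (Qp : Finset (Ed d)) (ω : Ed d → ℝ) (δ : ℝ)
    (u : Ed d → Fin d → ℂ) (x : Ed d) : ℂ :=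
  ∑ s ∈ Qp, (((δ ^ d * ω s) * scaleK d ρ δ ‖δ • s‖ : ℝ) : ℂ)
      * ∑ j : Fin d, ((δ • s : Ed d) j : ℂ) * (u (x + δ • s) j - u x j)

/-- Complex quasi-discrete nonlocal gradient. -/
def qGC (d : ℕ) (ρ : ℝ → ℝ) (Qp : Finset (Ed d)) (ω : Ed d → ℝ) (δ : ℝ)
    (θ : Ed d → ℂ) (x : Ed d) : Fin d → ℂ := fun i =>
  ∑ s ∈ Qp, (((δ ^ d * ω s) * scaleK d ρ δ ‖δ • s‖ : ℝ) : ℂ) * (θ (x + δ • s) - θ x)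
      * ((δ • s : Ed d) i : ℂ)

/-- Complex semi-discrete quasi-discrete peridynamic Navier operator. -/
def qLSHC (d : ℕ) (ρ : ℝ → ℝ) (Qp : Finset (Ed d)) (ω : Ed d → ℝ) (μ lam δ : ℝ)
    (h : Fin d → ℝ) (u : Ed d → Fin d → ℂ) (x : Ed d) : Fin d → ℂ :=
  ((Cα d * μ / d : ℝ) : ℂ) • qLBC d ρ Qp ω δ u x
    + ((Cβ d * (lam - μ) / d : ℝ) : ℂ) •
        qGC d ρ Qp ω δ (interpC d h (qDC d ρ Qp ω δ u)) x

/-- Fourier series of a vector sequence. -/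
def fser (d : ℕ) (c : (Fin d → ℤ) → Fin d → ℂ) (ξ : Fin d → ℝ) : Fin d → ℂ :=
  ∑' k : Fin d → ℤ,
    Complex.exp (-Complex.I * ((∑ j : Fin d, (k j : ℝ) * ξ j : ℝ) : ℂ)) • c k

/-- The cube `Q = (-π,π)^d`. -/
def Qset (d : ℕ) : Set (Fin d → ℝ) := Set.univ.pi fun _ => Set.Ioo (-π) π

/-- `(ξ + 2πr) ⊘ h` as a Euclidean vector. -/
def shiftDiv (d : ℕ) (h : Fin d → ℝ) (ξ : Fin d → ℝ) (r : Fin d → ℤ) : Ed d :=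
  toEd d fun j => (ξ j + 2 * π * (r j : ℝ)) / h j

/-- `ξ ⊘ h` as a Euclidean vector. -/
def divEd (d : ℕ) (h : Fin d → ℝ) (ξ : Fin d → ℝ) : Ed d :=
  toEd d fun j => ξ j / h j

/-- `∏_j h_j (sin(ξ_j/2)/(ξ_j + 2π r_j))^m`. -/
def sinFactor (d : ℕ) (h : Fin d → ℝ) (ξ : Fin d → ℝ) (r : Fin d → ℤ) (m : ℕ) : ℝ :=
  ∏ j : Fin d, h j * (Real.sin (ξ j / 2) / (ξ j + 2 * π * (r j : ℝ))) ^ m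

/-- Galerkin symbol `M_G(δ,h,ξ)`. -/
def MG (d : ℕ) [NeZero d] (ρ : ℝ → ℝ) (μ lam δ : ℝ) (h : Fin d → ℝ) (ξ : Fin d → ℝ) :
    Matrix (Fin d) (Fin d) ℝ :=
  (2 : ℝ) ^ (8 * d) • (∑' r : Fin d → ℤ, sinFactor d h ξ r 8 • MB d ρ μ δ (shiftDiv d h ξ r))
    + (2 : ℝ) ^ (8 * d + 4) •
        (∑' r : Fin d → ℤ, sinFactor d h ξ r 12 • MD d ρ μ lam δ (shiftDiv d h ξ r))

/-- Collocation symbol `M_C(δ,h,ξ)`. -/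
def MC (d : ℕ) [NeZero d] (ρ : ℝ → ℝ) (μ lam δ : ℝ) (h : Fin d → ℝ) (ξ : Fin d → ℝ) :
    Matrix (Fin d) (Fin d) ℝ :=
  (2 : ℝ) ^ (4 * d) • (∑' r : Fin d → ℤ, sinFactor d h ξ r 4 • MB d ρ μ δ (shiftDiv d h ξ r))
    + (2 : ℝ) ^ (4 * d + 4) •
        (∑' r : Fin d → ℤ, sinFactor d h ξ r 8 • MD d ρ μ lam δ (shiftDiv d h ξ r))

/-- Quasi-discrete collocation symbol `M^ε_C(δ,h,ξ)`. -/
def MCq (d : ℕ) [NeZero d] (ρ : ℝ → ℝ) (Qp : Finset (Ed d)) (ω : Ed d → ℝ)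
    (μ lam δ : ℝ) (h : Fin d → ℝ) (ξ : Fin d → ℝ) : Matrix (Fin d) (Fin d) ℝ :=
  (2 : ℝ) ^ (4 * d) •
      (∑' r : Fin d → ℤ, sinFactor d h ξ r 4 • MBq d ρ Qp ω μ δ (shiftDiv d h ξ r))
    + (2 : ℝ) ^ (4 * d + 4) •
        (∑' r : Fin d → ℤ, sinFactor d h ξ r 8 • MDq d ρ Qp ω μ lam δ (shiftDiv d h ξ r))

lemma exists_r0 {ρ : ℝ → ℝ} (hnn : ∀ r, 0 ≤ ρ r) (hsupp : ∀ r, 1 < r → ρ r = 0)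
    (hnz : KernelNontrivial ρ) : ∃ r₀, 0 < r₀ ∧ r₀ ≤ 1 ∧ 0 < ρ r₀ := by
  by_contra h
  push_neg at h
  apply hnz
  have hz : ∀ r : ℝ, 0 < r → ρ r = 0 := by
    intro r hr
    rcases le_or_gt r 1 with h1 | h1
    · exact le_antisymm (h r hr h1) (hnn r)
    · exact hsupp r h1
  rw [MeasureTheory.ae_iff, Measure.restrict_apply' measurableSet_Ici]
  refine measure_mono_null (fun r hr => ?_) (measure_singleton (0:ℝ))
  rcases hr with ⟨hr1, hr2⟩
  simp only [mem_singleton_iff]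
  by_contra h0
  exact hr1 (hz r (lt_of_le_of_ne hr2 (Ne.symm h0)))

lemma coord_sq_le {d : ℕ} (s : Ed d) (i : Fin d) : s i ^ 2 ≤ ‖s‖ ^ 2 := by
  rw [EuclideanSpace.norm_eq, Real.sq_sqrt (by positivity)]
  simp only [Real.norm_eq_abs, sq_abs]
  exact Finset.single_le_sum (f := fun j => s j ^ 2) (fun j _ => sq_nonneg _) (Finset.mem_univ i)

lemma integral_pos {d : ℕ} [NeZero d] (ρ : ℝ → ℝ)
    (hnn : ∀ r, 0 ≤ ρ r) (hmono : ∀ r t, 0 ≤ r → r ≤ t → ρ t ≤ ρ r)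
    {r₀ : ℝ} (hr₀ : 0 < r₀) (hr₁ : r₀ ≤ 1) (hρr₀ : 0 < ρ r₀)
    (t : ℝ) (ht : t ≠ 0) (i j : Fin d) :
    0 < ∫ s in ball (0 : Ed d) 1,
      ρ ‖s‖ * (s i ^ 2 / ‖s‖ ^ 2) * (1 - Real.cos (t * s j)) := by
  set f : Ed d → ℝ := fun s => ρ ‖s‖ * (s i ^ 2 / ‖s‖ ^ 2) * (1 - Real.cos (t * s j)) with hf
  set h : Ed d → ℝ := fun s => (s i ^ 2 / ‖s‖ ^ 2) * (1 - Real.cos (t * s j)) with hh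
  -- nonnegativity
  have hcos : ∀ x : ℝ, 0 ≤ 1 - Real.cos x := fun x => by
    have := Real.cos_le_one x; linarith
  have hnonneg : ∀ s, 0 ≤ f s := fun s => by
    have := hnn ‖s‖; have := hcos (t * s j); positivity
  -- measurability
  set g : ℝ → ℝ := fun r => ρ (max r 0) with hg
  have hganti : Antitone g := fun a b hab =>
    hmono _ _ (le_max_right _ _) (max_le_max hab le_rfl)
  have hgm : Measurable g := hganti.measurable
  have hfeq : ∀ s : Ed d, f s = g ‖s‖ * (s i ^ 2 / ‖s‖ ^ 2) * (1 - Real.cos (t * s j)) := by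
    intro s; simp [hf, hg, max_eq_left (norm_nonneg s)]
  have hmble : Measurable f := by
    have h1 : Measurable fun s : Ed d => g ‖s‖ := hgm.comp measurable_norm
    have : Measurable fun s : Ed d =>
        g ‖s‖ * (s i ^ 2 / ‖s‖ ^ 2) * (1 - Real.cos (t * s j)) := by fun_prop
    simpa only [← hfeq] using this
  -- boundedness and integrability
  have hbd : ∀ s : Ed d, ‖f s‖ ≤ ρ 0 * 1 * 2 := by
    intro s
    rw [Real.norm_eq_abs, abs_of_nonneg (hnonneg s)]
    have h1 : ρ ‖s‖ ≤ ρ 0 := hmono 0 ‖s‖ le_rfl (norm_nonneg s)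
    have h2 : s i ^ 2 / ‖s‖ ^ 2 ≤ 1 := by
      rcases eq_or_ne ‖s‖ 0 with h0 | h0
      · simp [h0]
      · exact div_le_one_of_le₀ (coord_sq_le s i) (by positivity)
    have h3 : 1 - Real.cos (t * s j) ≤ 2 := by
      have := Real.neg_one_le_cos (t * s j); linarith
    have := hnn ‖s‖; have := hcos (t * s j); have h4 := hnn 0
    calc ρ ‖s‖ * (s i ^ 2 / ‖s‖ ^ 2) * (1 - Real.cos (t * s j))
        ≤ ρ 0 * 1 * (1 - Real.cos (t * s j)) := by
          apply mul_le_mul_of_nonneg_right _ (hcos _)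
          apply mul_le_mul h1 h2 (by positivity) h4
      _ ≤ ρ 0 * 1 * 2 := by
          apply mul_le_mul_of_nonneg_left h3 (by positivity)
  have hint : IntegrableOn f (ball (0 : Ed d) 1) volume :=
    Measure.integrableOn_of_bounded measure_ball_lt_top.ne
      hmble.aestronglyMeasurable (ae_of_all _ hbd)
  -- the point c₀
  set a : ℝ := min (r₀ / (2 * Real.sqrt d)) (π / (2 * |t|)) with ha
  have hd0 : (0:ℝ) < d := by exact_mod_cast Nat.pos_of_ne_zero (NeZero.ne d)
  have hapos : 0 < a := by
    apply lt_min
    · positivity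
    · have : 0 < |t| := abs_pos.mpr ht
      positivity
  set c₀ : Ed d := toEd d (fun _ => a) with hc₀
  have hc₀app : ∀ k : Fin d, c₀ k = a := fun k => rfl
  have hc₀norm : ‖c₀‖ ^ 2 = d * a ^ 2 := by
    rw [EuclideanSpace.norm_eq, Real.sq_sqrt (by positivity)]
    simp [hc₀app, Finset.sum_const, Real.norm_eq_abs, sq_abs, mul_comm]
  have hc₀lt : ‖c₀‖ < r₀ := by
    have h1 : a ≤ r₀ / (2 * Real.sqrt d) := min_le_left _ _
    have hsd : 0 < Real.sqrt d := Real.sqrt_pos.mpr hd0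
    have h2 : ‖c₀‖ ^ 2 < r₀ ^ 2 := by
      rw [hc₀norm]
      calc (d:ℝ) * a ^ 2 ≤ d * (r₀ / (2 * Real.sqrt d)) ^ 2 := by
            apply mul_le_mul_of_nonneg_left _ hd0.le
            exact pow_le_pow_left₀ hapos.le h1 2
        _ = r₀ ^ 2 / 4 := by
            have hs2 : Real.sqrt d ^ 2 = (d:ℝ) := Real.sq_sqrt hd0.le
            rw [div_pow, mul_pow, hs2]
            field_simp
            ring
        _ < r₀ ^ 2 := by nlinarith
    nlinarith [norm_nonneg c₀]
  have hc₀pos : 0 < ‖c₀‖ := by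
    have : 0 < ‖c₀‖ ^ 2 := by rw [hc₀norm]; positivity
    nlinarith [norm_nonneg c₀]
  -- h c₀ > 0
  have hcoslt : Real.cos (t * a) < 1 := by
    rw [← Real.cos_abs, abs_mul, abs_of_nonneg hapos.le]
    have h1 : |t| * a ≤ π / 2 := by
      have h2 : a ≤ π / (2 * |t|) := min_le_right _ _
      have h3 : 0 < |t| := abs_pos.mpr ht
      rw [le_div_iff₀ (by positivity)] at h2
      nlinarith
    have := Real.pi_pos
    calc Real.cos (|t| * a) < Real.cos 0 :=
      Real.cos_lt_cos_of_nonneg_of_le_pi le_rfl (by linarith) (by positivity)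
      _ = 1 := Real.cos_zero
  have hhc₀ : 0 < h c₀ := by
    have h1 : 0 < c₀ i ^ 2 / ‖c₀‖ ^ 2 := by
      rw [hc₀app]; positivity
    have h2 : 0 < 1 - Real.cos (t * c₀ j) := by rw [hc₀app]; linarith
    exact mul_pos h1 h2
  -- continuity of h at c₀
  have hcont : ContinuousAt h c₀ := by
    have hci : Continuous fun s : Ed d => s i := by fun_prop
    have hcj : Continuous fun s : Ed d => s j := by fun_prop
    apply ContinuousAt.mul
    · apply ContinuousAt.div ((hci.pow 2).continuousAt) ((continuous_norm.pow 2).continuousAt)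
      exact (pow_pos hc₀pos 2).ne'
    · exact ((continuous_const.sub (Real.continuous_cos.comp
        (continuous_const.mul hcj))).continuousAt)
  have hev : ∀ᶠ s in nhds c₀, h c₀ / 2 < h s :=
    hcont.eventually (eventually_gt_nhds (by linarith))
  rw [Metric.eventually_nhds_iff] at hev
  obtain ⟨ε, hε, hball⟩ := hev
  set U : Set (Ed d) := ball c₀ ε ∩ ball (0 : Ed d) r₀ with hU
  have hUopen : IsOpen U := isOpen_ball.inter isOpen_ball
  have hc₀U : c₀ ∈ U := by
    constructor
    · exact mem_ball_self hε
    · simpa [mem_ball, dist_zero_right] using hc₀lt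
  have hUsub : U ⊆ ball (0 : Ed d) 1 := fun s hs =>
    mem_ball.mpr (lt_of_lt_of_le (mem_ball.mp hs.2) (by simpa using hr₁))
  have hUvolpos : 0 < volume U := hUopen.measure_pos volume ⟨c₀, hc₀U⟩
  have hUvolfin : volume U ≠ ⊤ :=
    ((measure_mono hUsub).trans_lt measure_ball_lt_top).ne
  -- lower bound on U
  have hlow : ∀ s ∈ U, ρ r₀ * (h c₀ / 2) ≤ f s := by
    intro s hs
    have hs2 : ‖s‖ ≤ r₀ := by
      have := mem_ball.mp hs.2; rw [dist_zero_right] at this; linarith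
    have h1 : ρ r₀ ≤ ρ ‖s‖ := hmono ‖s‖ r₀ (norm_nonneg s) hs2
    have h2 : h c₀ / 2 ≤ h s := (hball (mem_ball.mp hs.1)).le
    have h3 : 0 ≤ h s := by
      have := sq_nonneg (s i); have := hcos (t * s j)
      have : 0 ≤ s i ^ 2 / ‖s‖ ^ 2 := by positivity
      exact mul_nonneg this (hcos _)
    calc ρ r₀ * (h c₀ / 2) ≤ ρ ‖s‖ * h s :=
          mul_le_mul h1 h2 (by linarith) (hnn _)
      _ = f s := by rw [hf, hh]; ring
  -- conclude
  have step1 : ρ r₀ * (h c₀ / 2) * (volume U).toReal ≤ ∫ s in U, f s := by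
    have := setIntegral_ge_of_const_le_real hUopen.measurableSet hUvolfin hlow
      (hint.mono_set hUsub)
    exact this
  have step2 : (∫ s in U, f s) ≤ ∫ s in ball (0 : Ed d) 1, f s :=
    setIntegral_mono_set hint (ae_of_all _ hnonneg) (HasSubset.Subset.eventuallyLE hUsub)
  have hvolpos : 0 < (volume U).toReal := ENNReal.toReal_pos hUvolpos.ne' hUvolfin
  have : 0 < ρ r₀ * (h c₀ / 2) * (volume U).toReal := by positivity
  linarith

lemma dot_proj {d : ℕ} (ξ : Ed d) (v : Fin d → ℝ) :
    dotProduct v ((projMat d ξ).mulVec v)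
      = (∑ i, v i * ξ i) ^ 2 / ‖ξ‖ ^ 2 := by
  have expand : (∑ i, v i * ξ i) ^ 2 = ∑ i : Fin d, ∑ j : Fin d, v i * ξ i * (v j * ξ j) := by
    rw [sq, Finset.sum_mul_sum]
  simp only [projMat, Matrix.mulVec, dotProduct, Matrix.of_apply]
  rw [expand, Finset.sum_div]
  refine Finset.sum_congr rfl fun i _ => ?_
  rw [Finset.mul_sum, Finset.sum_div]
  exact Finset.sum_congr rfl fun j _ => by ring

lemma dot_MS {d : ℕ} [NeZero d] (ρ : ℝ → ℝ) (μ lam δ : ℝ) (ξ : Ed d) (v : Fin d → ℝ) :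
    dotProduct v ((MS d ρ μ lam δ ξ).mulVec v)
      = (Cα d * μ / d / δ ^ 2) *
          (p1 d ρ (δ * ‖ξ‖) * ((∑ i, v i * v i) - (∑ i, v i * ξ i) ^ 2 / ‖ξ‖ ^ 2)
            + q1 d ρ (δ * ‖ξ‖) * ((∑ i, v i * ξ i) ^ 2 / ‖ξ‖ ^ 2))
        + (Cβ d * (lam - μ) / δ ^ 2 * b1 d ρ (δ * ‖ξ‖) ^ 2) *
            ((∑ i, v i * ξ i) ^ 2 / ‖ξ‖ ^ 2) := by
  have hvv : dotProduct v v = ∑ i, v i * v i := rfl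
  simp only [MS, MB, MD, Matrix.add_mulVec, dotProduct_add,
    Matrix.smul_mulVec, dotProduct_smul, Matrix.sub_mulVec,
    dotProduct_sub, Matrix.one_mulVec, smul_eq_mul, dot_proj, hvv]
  try ring

/-- Positive definiteness of the Fourier symbol: for `μ > 0`
and `λ ≥ μ`, for every `δ > 0` and `ξ ≠ 0` the matrix `M^S_δ(ξ)` is positive
definite. -/
theorem statement3 {d : ℕ} [NeZero d] (hd : d = 2 ∨ d = 3)
    (ρ : ℝ → ℝ) (hρ : KernelOK d ρ) (hρnz : KernelNontrivial ρ)
    (μ lam : ℝ) (hμ : 0 < μ) (hlam : μ ≤ lam) :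
    ∀ δ : ℝ, 0 < δ → ∀ ξ : Ed d, ξ ≠ 0 →
      ∀ v : Fin d → ℝ, v ≠ 0 →
        0 < dotProduct v ((MS d ρ μ lam δ ξ).mulVec v) := by
  obtain ⟨hnn, hmono, hsupp, hmom⟩ := hρ
  obtain ⟨r₀, hr₀, hr₁, hρr₀⟩ := exists_r0 hnn hsupp hρnz
  intro δ hδ ξ hξ v hv
  have hd0 : (0:ℝ) < d := by
    exact_mod_cast Nat.pos_of_ne_zero (NeZero.ne d)
  have hCα : (0:ℝ) < Cα d := by
    rcases hd with h | h <;> simp [Cα, h]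
  have hCβ : (0:ℝ) ≤ Cβ d := by
    rcases hd with h | h <;> simp [Cβ, h]
  have hξn : 0 < ‖ξ‖ := norm_pos_iff.mpr hξ
  set t : ℝ := δ * ‖ξ‖ with htdef
  have ht : t ≠ 0 := by positivity
  have hP : 0 < p1 d ρ t :=
    integral_pos ρ hnn hmono hr₀ hr₁ hρr₀ t ht (fstIdx d) (lstIdx d)
  have hQ : 0 < q1 d ρ t :=
    integral_pos ρ hnn hmono hr₀ hr₁ hρr₀ t ht (lstIdx d) (lstIdx d)
  rw [dot_MS]
  have ht2 : δ * ‖ξ‖ = t := rfl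
  rw [ht2]
  set T : ℝ := ∑ i, v i * ξ i with hTdef
  set S : ℝ := ∑ i, v i * v i with hSdef
  set W : ℝ := T ^ 2 / ‖ξ‖ ^ 2 with hWdef
  set A : ℝ := Cα d * μ / d / δ ^ 2 with hAdef
  set e : ℝ := Cβ d * (lam - μ) / δ ^ 2 * b1 d ρ t ^ 2 with hedef
  have hA : 0 < A := by rw [hAdef]; positivity
  have he : 0 ≤ e := by
    rw [hedef]
    have h1 : 0 ≤ lam - μ := by linarith
    have h2 : 0 ≤ b1 d ρ t ^ 2 := sq_nonneg _
    have h3 : 0 ≤ Cβ d * (lam - μ) / δ ^ 2 := by positivity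
    exact mul_nonneg h3 h2
  have hW0 : 0 ≤ W := by rw [hWdef]; positivity
  have hS : 0 < S := by
    rw [hSdef]
    obtain ⟨i, hi⟩ := Function.ne_iff.mp hv
    exact Finset.sum_pos' (fun j _ => mul_self_nonneg _)
      ⟨i, Finset.mem_univ i, mul_self_pos.mpr hi⟩
  have hSW : W ≤ S := by
    rw [hWdef, hSdef, div_le_iff₀ (by positivity : (0:ℝ) < ‖ξ‖ ^ 2)]
    have hcs := Finset.sum_mul_sq_le_sq_mul_sq Finset.univ v ξ
    have hN2 : ‖ξ‖ ^ 2 = ∑ i, ξ i ^ 2 := by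
      rw [EuclideanSpace.norm_eq, Real.sq_sqrt (by positivity)]
      simp [Real.norm_eq_abs, sq_abs]
    have hS2 : (∑ i, v i * v i) = ∑ i, v i ^ 2 :=
      Finset.sum_congr rfl fun i _ => (sq (v i)).symm
    rw [hN2, hS2, hTdef]
    exact hcs
  have expand : A * (p1 d ρ t * (S - W) + q1 d ρ t * W) + e * W
      = A * p1 d ρ t * (S - W) + A * q1 d ρ t * W + e * W := by ring
  rw [expand]
  rcases eq_or_lt_of_le hW0 with hW | hW
  · have h1 : 0 < A * p1 d ρ t * (S - W) := by
      rw [← hW, sub_zero]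
      exact mul_pos (mul_pos hA hP) hS
    have h2 : A * q1 d ρ t * W = 0 := by rw [← hW, mul_zero]
    have h3 : e * W = 0 := by rw [← hW, mul_zero]
    linarith
  · have h1 : 0 ≤ A * p1 d ρ t * (S - W) :=
      mul_nonneg (mul_pos hA hP).le (by linarith)
    have h2 : 0 < A * q1 d ρ t * W := mul_pos (mul_pos hA hQ) hW
    have h3 : 0 ≤ e * W := mul_nonneg he hW0
    linarith

end PD
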